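/- arXiv:2010.13436 — 2 statements merged into one kernel-verified Lean document; each statement's English description precedes it below -/
import Mathlib

section
/- In dimension d = 1 with ℏ > 0, the semiclassical harmonic oscillator propagator acts on coherent states by e^{−it Ĥ_ℏ/ℏ} Ψ_{z₀}^ℏ = e^{−it/2} Ψ_{φ_t(z₀)}^ℏ, where Ĥ_ℏ = (1/2)(−ℏ²∂_x² + x²), Ψ_{z₀}^ℏ is the coherent state centered at z₀ = (x₀,ξ₀), and φ_t(x₀,ξ₀) = (x₀ cos t + ξ₀ sin t, −x₀ sin t + ξ₀ cos t) is the classical rotation flow. -/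
/-! The propagated state is a Gaussian `N e^{G(t,x)}` whose phase `G` is quadratic in `x`, with
coefficients built from the point `(a, b) = φ_t(z₀)` of the flow, which obeys `a' = b`, `b' = -a`.
Hence `∂_t u = (∂_t G) u` and `∂_x² u = ((∂_x G)² + ∂_x² G) u`, so the Schrödinger equation
reduces to the algebraic identity `iℏ ∂_t G = ½ (−ℏ² ((∂_x G)² + ∂_x² G) + x²)`. -/

open Real

/-- The one-dimensional coherent state
`Ψ_{(x₀,ξ₀)}^ℏ(x) = e^{−iξ₀x₀/(2ℏ)} e^{iξ₀x/ℏ} (πℏ)^{−1/4} e^{−(x−x₀)²/(2ℏ)}`. -/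
noncomputable def coh1 (ℏ x₀ ξ₀ x : ℝ) : ℂ :=
  Complex.exp (-(Complex.I * (ξ₀ : ℂ) * (x₀ : ℂ)) / (2 * ℏ)) *
    Complex.exp (Complex.I * (ξ₀ : ℂ) * (x : ℂ) / ℏ) *
    (((π * ℏ) ^ (-(1 : ℝ) / 4) : ℝ) : ℂ) *
    Complex.exp (-((x - x₀ : ℝ) : ℂ) ^ 2 / (2 * ℏ))

/-- The classical harmonic-oscillator flow `φ_t(x₀,ξ₀)`, a rotation of the plane. -/
noncomputable def rotFlow1 (t : ℝ) (z : ℝ × ℝ) : ℝ × ℝ :=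
  (z.1 * Real.cos t + z.2 * Real.sin t, -z.1 * Real.sin t + z.2 * Real.cos t)

/-- The propagated coherent state `u(t,x) = e^{−it/2} Ψ_{φ_t(z₀)}^ℏ(x)`. -/
noncomputable def propState (ℏ : ℝ) (z₀ : ℝ × ℝ) (t x : ℝ) : ℂ :=
  Complex.exp (-(Complex.I * t) / 2) *
    coh1 ℏ (rotFlow1 t z₀).1 (rotFlow1 t z₀).2 x

open Complex

noncomputable def cohPhase (ℏ a b x : ℝ) : ℂ :=
  -(I * b * a) / (2 * ℏ) + I * b * x / ℏ - ((x - a : ℝ) : ℂ) ^ 2 / (2 * ℏ)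

lemma coh1_eq_mul_cexp_cohPhase (ℏ a b x : ℝ) :
    coh1 ℏ a b x = (((π * ℏ) ^ (-(1 : ℝ) / 4) : ℝ) : ℂ) * exp (cohPhase ℏ a b x) := by
  simp only [coh1, cohPhase, Complex.exp_sub, Complex.exp_add, neg_div, Complex.exp_neg]
  ring

lemma propState_eq_mul_cexp (ℏ : ℝ) (z : ℝ × ℝ) (t x : ℝ) :
    propState ℏ z t x = (((π * ℏ) ^ (-(1 : ℝ) / 4) : ℝ) : ℂ) *
      exp (-(I * t) / 2 + cohPhase ℏ (rotFlow1 t z).1 (rotFlow1 t z).2 x) := by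
  rw [propState, coh1_eq_mul_cexp_cohPhase, Complex.exp_add]
  ring

lemma hasDerivAt_cohPhase (ℏ a b x : ℝ) :
    HasDerivAt (cohPhase ℏ a b) ((I * b - (x - a)) / ℏ) x := by
  have hx : HasDerivAt (fun y : ℝ => (y : ℂ)) 1 x := (hasDerivAt_id' x).ofReal_comp
  have h := (((hx.const_mul (I * b)).div_const (ℏ : ℂ)).const_add (-(I * b * a) / (2 * ℏ))).sub
    (((hx.sub_const (a : ℂ)).fun_pow 2).div_const (2 * ℏ : ℂ))
  have e : cohPhase ℏ a b =
      fun y : ℝ => -(I * b * a) / (2 * ℏ) + I * b * y / ℏ - ((y : ℂ) - a) ^ 2 / (2 * ℏ) := by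
    funext y; simp [cohPhase]
  rw [e]
  exact h.congr_deriv (by push_cast; ring)

lemma hasDerivAt_cohPhase_comp {a b : ℝ → ℝ} {a' b' t : ℝ} (ha : HasDerivAt a a' t)
    (hb : HasDerivAt b b' t) (ℏ x : ℝ) :
    HasDerivAt (fun s => cohPhase ℏ (a s) (b s) x)
      (-(I * (b' * a t + b t * a')) / (2 * ℏ) + I * b' * x / ℏ + (x - a t) * a' / ℏ) t := by
  have ha := ha.ofReal_comp
  have hb := hb.ofReal_comp
  have h := ((((hb.const_mul I).mul ha).fun_neg.div_const (2 * ℏ : ℂ)).add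
    (((hb.const_mul I).mul_const (x : ℂ)).div_const (ℏ : ℂ))).sub
    (((ha.const_sub (x : ℂ)).fun_pow 2).div_const (2 * ℏ : ℂ))
  have e : (fun s => cohPhase ℏ (a s) (b s) x) = fun s =>
      -(I * b s * a s) / (2 * ℏ) + I * b s * x / ℏ - ((x : ℂ) - a s) ^ 2 / (2 * ℏ) := by
    funext s; simp [cohPhase]
  rw [e]
  exact h.congr_deriv (by push_cast; ring)

lemma hasDerivAt_rotFlow1_fst (z : ℝ × ℝ) (t : ℝ) :
    HasDerivAt (fun s => (rotFlow1 s z).1) (rotFlow1 t z).2 t :=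
  (((Real.hasDerivAt_cos t).const_mul z.1).fun_add
    ((Real.hasDerivAt_sin t).const_mul z.2)).congr_deriv (by simp only [rotFlow1]; ring)

lemma hasDerivAt_rotFlow1_snd (z : ℝ × ℝ) (t : ℝ) :
    HasDerivAt (fun s => (rotFlow1 s z).2) (-(rotFlow1 t z).1) t :=
  (((Real.hasDerivAt_sin t).const_mul (-z.1)).fun_add
    ((Real.hasDerivAt_cos t).const_mul z.2)).congr_deriv (by simp only [rotFlow1]; ring)

lemma iteratedDeriv_two_const_mul_cexp {𝕜 : Type*} [NontriviallyNormedField 𝕜]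
    [NormedAlgebra 𝕜 ℂ] {g g' : 𝕜 → ℂ} {g'' : ℂ} {x : 𝕜} (c : ℂ)
    (hg : ∀ y, HasDerivAt g (g' y) y) (hg' : HasDerivAt g' g'' x) :
    iteratedDeriv 2 (fun y => c * exp (g y)) x = (g' x ^ 2 + g'') * (c * exp (g x)) := by
  have hderiv : deriv (fun y => c * exp (g y)) = fun y => c * exp (g y) * g' y :=
    funext fun y => (((hg y).cexp).const_mul c).deriv.trans (mul_assoc _ _ _).symm
  rw [iteratedDeriv_succ, iteratedDeriv_one, hderiv,
    ((((hg x).cexp).const_mul c).fun_mul hg').deriv]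
  ring

lemma iteratedDeriv_two_propState (ℏ : ℝ) (z : ℝ × ℝ) (t x : ℝ) :
    iteratedDeriv 2 (propState ℏ z t) x =
      (((I * (rotFlow1 t z).2 - (x - (rotFlow1 t z).1)) / ℏ) ^ 2 + -1 / ℏ) *
        propState ℏ z t x := by
  have hx : HasDerivAt (fun y : ℝ => (y : ℂ)) 1 x := (hasDerivAt_id' x).ofReal_comp
  rw [funext (propState_eq_mul_cexp ℏ z t), iteratedDeriv_two_const_mul_cexp _
    (fun y => (hasDerivAt_cohPhase ℏ _ _ y).const_add _)
    (((hx.sub_const _).const_sub _).div_const _)]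

lemma hasDerivAt_propState_time (ℏ : ℝ) (z : ℝ × ℝ) (t x : ℝ) :
    HasDerivAt (fun s => propState ℏ z s x)
      ((-I / 2 + (-(I * (-(rotFlow1 t z).1 * (rotFlow1 t z).1 + (rotFlow1 t z).2 * (rotFlow1 t z).2))
          / (2 * ℏ) + I * -(rotFlow1 t z).1 * x / ℏ
          + (x - (rotFlow1 t z).1) * (rotFlow1 t z).2 / ℏ)) * propState ℏ z t x) t := by
  have ht : HasDerivAt (fun s : ℝ => -(I * s) / 2) (-I / 2) t := by
    simpa using (((hasDerivAt_id' t).ofReal_comp.const_mul I).neg.div_const (2 : ℂ))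
  have h := ((ht.fun_add (hasDerivAt_cohPhase_comp (hasDerivAt_rotFlow1_fst z t)
    (hasDerivAt_rotFlow1_snd z t) ℏ x)).cexp).const_mul (((π * ℏ) ^ (-(1 : ℝ) / 4) : ℝ) : ℂ)
  rw [funext fun s => propState_eq_mul_cexp ℏ z s x, propState_eq_mul_cexp]
  exact h.congr_deriv (by push_cast; ring)

lemma harmonic_oscillator_phase_identity (ℏ a b x u : ℂ) (hℏ : ℏ ≠ 0) :
    (I * ℏ)⁻¹ * (1 / 2 * (-ℏ ^ 2 * ((((I * b - (x - a)) / ℏ) ^ 2 + -1 / ℏ) * u) + x ^ 2 * u)) =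
      (-I / 2 + (-(I * (-a * a + b * b)) / (2 * ℏ) + I * -a * x / ℏ + (x - a) * b / ℏ)) * u := by
  rw [inv_mul_eq_iff_eq_mul₀ (mul_ne_zero I_ne_zero hℏ)]
  field_simp
  ring_nf
  rw [I_sq]
  ring

/-- In dimension one, `e^{−itĤ_ℏ/ℏ} Ψ_{z₀}^ℏ = e^{−it/2} Ψ_{φ_t(z₀)}^ℏ`: the function
`u(t,x) = e^{−it/2} Ψ_{φ_t(z₀)}^ℏ(x)` satisfies `u(0,·) = Ψ_{z₀}^ℏ` and solves the
Schrödinger equation `iℏ ∂_t u = (1/2)(−ℏ²∂_x² + x²)u`. -/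
theorem stmt11 (ℏ : ℝ) (hℏ : 0 < ℏ) (z₀ : ℝ × ℝ) :
    (∀ x : ℝ, propState ℏ z₀ 0 x = coh1 ℏ z₀.1 z₀.2 x) ∧
    (∀ t x : ℝ,
      HasDerivAt (fun s => propState ℏ z₀ s x)
        ((Complex.I * (ℏ : ℂ))⁻¹ *
          ((1 / 2) * (-(ℏ : ℂ) ^ 2 * iteratedDeriv 2 (propState ℏ z₀ t) x +
            (x : ℂ) ^ 2 * propState ℏ z₀ t x))) t) := by
  refine ⟨fun x => by simp [propState, rotFlow1], fun t x => ?_⟩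
  rw [iteratedDeriv_two_propState, harmonic_oscillator_phase_identity _ _ _ _ _
    (ofReal_ne_zero.mpr hℏ.ne')]
  exact_mod_cast hasDerivAt_propState_time ℏ z₀ t x
end

section
/- With ω, {v_n}, {ν_n} as above and ℋ_n := v_n Σ_j ν_{n,j} H_j, a Borel probability measure μ on ℝ^{2d} is invariant under the Hamiltonian flow φ_t^H of H = Σ_j ω_j H_j for all t ∈ ℝ if and only if it is invariant under each of the flows φ_t^{ℋ_n} for all t ∈ ℝ and n = 1,…,d_ω. -/
/-!
The flows of the `ℋ_n` assemble into an action of `ℝ^m` on `ℂ^d`: the parameter `s` acts by the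
diagonal rotation with frequency vector `Σ_n s_n ν_n`, and the flow of `H` at time `t` is the action
of `t v`. The parameters whose action preserves `μ` form a closed subgroup `A` of `ℝ^m`. It contains
the line `ℝ v`, and, `ν` being rational, the lattice `2πN ℤ^m` for a common denominator `N`.
Such a subgroup is all of `ℝ^m` (a Kronecker-type argument). Otherwise let `W ≠ ℝ^m` be the
largest subspace contained in `A`: normalized small elements of `A` accumulate at directions in `W`,
so `A` meets a complement of `W` in a lattice, and a coordinate for a basis of that lattice, composed
with the projection, is a nonzero linear functional taking integer values on `A`. It vanishes on
`v` and is integral on `2πN ℤ^m`, which gives a nontrivial integer relation between the `v_n`.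
-/

open MeasureTheory

/-- The diagonal harmonic-oscillator flow with frequency vector `α` on `ℂ^d ≅ ℝ^{2d}`:
`z_j ↦ e^{−iα_j t} z_j`. -/
noncomputable def diagFlow (d : ℕ) (α : Fin d → ℝ) (t : ℝ) (z : Fin d → ℂ) :
    Fin d → ℂ :=
  fun j => Complex.exp (-Complex.I * ((α j * t : ℝ) : ℂ)) * z j

open Filter Topology Function Submodule BoundedContinuousFunction

theorem IsZLattice.exists_linearMap_ne_zero_intValued {F : Type*} [NormedAddCommGroup F]
    [NormedSpace ℝ F] [FiniteDimensional ℝ F] [Nontrivial F] (L : Submodule ℤ F)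
    [DiscreteTopology L] [IsZLattice ℝ L] :
    ∃ ψ : F →ₗ[ℝ] ℝ, ψ ≠ 0 ∧ ∀ y ∈ L, ∃ z : ℤ, ψ y = z := by
  have := ZLattice.module_free ℝ L
  have := ZLattice.module_finite ℝ L
  let b₀ := Module.Free.chooseBasis ℤ L
  let b := b₀.ofZLatticeBasis ℝ L
  obtain ⟨i⟩ := b.index_nonempty
  refine ⟨b.coord i, fun h => by simpa using LinearMap.congr_fun h (b i), fun y hy => ?_⟩
  exact ⟨b₀.repr ⟨y, hy⟩ i, b₀.ofZLatticeBasis_repr_apply ℝ L ⟨y, hy⟩ i⟩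

theorem eq_zero_of_forall_mul_eq_intCast {a : ℝ} (h : ∀ t : ℝ, ∃ z : ℤ, t * a = z) : a = 0 := by
  by_contra ha
  obtain ⟨z, hz⟩ := h (2 * a)⁻¹
  have h2 : ((2 * z : ℤ) : ℝ) = 1 := by push_cast; rw [← hz]; field_simp
  have : 2 * z = 1 := by exact_mod_cast h2
  omega

namespace AddSubgroup

variable {E : Type*} [NormedAddCommGroup E] [NormedSpace ℝ E] {H : AddSubgroup E}

def lineality (H : AddSubgroup E) : Submodule ℝ E where
  carrier := {y | ∀ t : ℝ, t • y ∈ H}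
  add_mem' hy hy' t := by simpa [smul_add] using H.add_mem (hy t) (hy' t)
  zero_mem' t := by simp
  smul_mem' r y hy t := by simpa [smul_smul] using hy (t * r)

theorem lineality_subset : (H.lineality : Set E) ⊆ H := fun y hy => by simpa using hy 1

theorem mem_lineality_of_tendsto (hH : IsClosed (H : Set E)) {x : ℕ → E} {u : E}
    (hxH : ∀ k, x k ∈ H) (hx : Tendsto x atTop (𝓝 0))
    (hu : Tendsto (fun k => ‖x k‖⁻¹ • x k) atTop (𝓝 u)) : u ∈ H.lineality := by
  intro t
  -- `⌊t / ‖x k‖⌋ • x k ∈ H` differs from `t • (‖x k‖⁻¹ • x k)` by at most `‖x k‖`.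
  have hfloor : ∀ k, (⌊t * ‖x k‖⁻¹⌋ : ℤ) • x k
      = t • (‖x k‖⁻¹ • x k) - Int.fract (t * ‖x k‖⁻¹) • x k := fun k => by
    rw [← Int.cast_smul_eq_zsmul ℝ, Int.fract, sub_smul, mul_smul]
    abel
  have hfract : Tendsto (fun k => Int.fract (t * ‖x k‖⁻¹) • x k) atTop (𝓝 0) := by
    refine squeeze_zero_norm (fun k => ?_) (by simpa using hx.norm)
    rw [norm_smul, Real.norm_of_nonneg (Int.fract_nonneg _)]
    exact mul_le_of_le_one_left (norm_nonneg _) (Int.fract_lt_one _).le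
  have hlim := (hu.const_smul t).sub hfract
  rw [sub_zero] at hlim
  exact hH.mem_of_tendsto (hlim.congr fun k => (hfloor k).symm)
    (Eventually.of_forall fun k => H.zsmul_mem (hxH k) _)

variable [FiniteDimensional ℝ E]

theorem exists_pos_le_norm_of_disjoint_lineality (hH : IsClosed (H : Set E)) {F : Submodule ℝ E}
    (hF : Disjoint F H.lineality) : ∃ ε > 0, ∀ y ∈ H, y ∈ F → y ≠ 0 → ε ≤ ‖y‖ := by
  by_contra! hsmall
  choose y hyH hyF hy0 hy using fun k : ℕ => hsmall (1 / (k + 1)) Nat.one_div_pos_of_nat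
  have hsphere : ∀ k, ‖y k‖⁻¹ • y k ∈ Metric.sphere (0 : E) 1 := fun k => by
    simp [norm_smul, hy0 k]
  obtain ⟨u, hu, φ, hφ, hlim⟩ := (isCompact_sphere (0 : E) 1).tendsto_subseq hsphere
  have hy_lim : Tendsto (y ∘ φ) atTop (𝓝 0) :=
    squeeze_zero_norm (fun k => (hy (φ k)).le)
      (tendsto_one_div_add_atTop_nhds_zero_nat.comp hφ.tendsto_atTop)
  have huF : u ∈ F := F.closed_of_finiteDimensional.mem_of_tendsto hlim
    (Eventually.of_forall fun k => F.smul_mem _ (hyF (φ k)))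
  have huW : u ∈ H.lineality := mem_lineality_of_tendsto hH (fun k => hyH (φ k)) hy_lim hlim
  have : u = 0 := (Submodule.disjoint_def.1 hF) u huF huW
  simp [this] at hu

theorem exists_linearMap_ne_zero_intValued (hH : IsClosed (H : Set E))
    (hspan : span ℝ (H : Set E) = ⊤) (hW : H.lineality ≠ ⊤) :
    ∃ φ : E →ₗ[ℝ] ℝ, φ ≠ 0 ∧ ∀ h ∈ H, ∃ z : ℤ, φ h = z := by
  obtain ⟨F, hWF⟩ := H.lineality.exists_isCompl
  let P : E →ₗ[ℝ] F := F.projectionOnto H.lineality hWF.symm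
  have hPH : ∀ h ∈ H, (P h : E) ∈ H := fun h hh => by
    have := H.sub_mem hh (lineality_subset (F.sub_projection_mem hWF.symm h))
    simpa [P, coe_projectionOnto_apply] using this
  let L : Submodule ℤ F := H.toIntSubmodule.comap (F.subtype.restrictScalars ℤ)
  obtain ⟨ε, hε, hεL⟩ := exists_pos_le_norm_of_disjoint_lineality hH hWF.symm.disjoint
  have : DiscreteTopology L :=
    DiscreteTopology.of_forall_le_norm hε fun y hy => hεL y y.2 y.1.2 (by simpa using hy)
  have : IsZLattice ℝ L := ⟨by
    rw [eq_top_iff, ← range_projectionOnto hWF.symm, LinearMap.range_eq_map,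
      ← hspan, map_span]
    exact span_mono (by rintro _ ⟨h, hh, rfl⟩; exact hPH h hh)⟩
  have : Nontrivial F :=
    Submodule.nontrivial_iff_ne_bot.2 fun hF => hW (eq_top_of_isCompl_bot (hF ▸ hWF))
  obtain ⟨ψ, hψ0, hψL⟩ := IsZLattice.exists_linearMap_ne_zero_intValued L
  refine ⟨ψ ∘ₗ P, fun h => hψ0 (LinearMap.ext fun y => ?_), fun h hh => hψL _ (hPH h hh)⟩
  simpa [P, projectionOnto_apply_left] using LinearMap.congr_fun h y

theorem eq_top_of_forall_smul_mem_of_forall_single_mem {ι : Type*} [Fintype ι] [DecidableEq ι]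
    {H : AddSubgroup (ι → ℝ)} (hH : IsClosed (H : Set (ι → ℝ))) {v : ι → ℝ}
    (hv : LinearIndependent ℚ v) (hline : ∀ t : ℝ, t • v ∈ H) {c : ℝ} (hc : c ≠ 0)
    (hlat : ∀ i, Pi.single i c ∈ H) : H = ⊤ := by
  have hexpand : ∀ x : ι → ℝ, x = ∑ i, (x i / c) • Pi.single i c := fun x => by
    conv_lhs => rw [← Finset.univ_sum_single x]
    congr! with i
    rw [← Pi.single_smul, smul_eq_mul, div_mul_cancel₀ _ hc]
  by_contra hne
  have hspan : span ℝ (H : Set (ι → ℝ)) = ⊤ := eq_top_iff.2 fun x _ => by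
    rw [hexpand x]
    exact sum_mem fun i _ => smul_mem _ _ (subset_span (hlat i))
  have hW : H.lineality ≠ ⊤ := fun hW =>
    hne (eq_top_iff.2 fun x _ => lineality_subset (hW ▸ Submodule.mem_top (x := x)))
  obtain ⟨φ, hφ0, hφH⟩ := exists_linearMap_ne_zero_intValued hH hspan hW
  choose z hz using fun i => hφH _ (hlat i)
  have hφ : ∀ x, φ x = c⁻¹ * ∑ i, x i * z i := fun x => by
    conv_lhs => rw [hexpand x]
    simp only [map_sum, map_smul, smul_eq_mul, hz, Finset.mul_sum]
    exact Finset.sum_congr rfl fun i _ => by ring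
  have hφv : φ v = 0 := eq_zero_of_forall_mul_eq_intCast fun t => by
    simpa using hφH _ (hline t)
  have hrel : ∑ i, (z i : ℚ) • v i = 0 := by
    rw [hφ, mul_eq_zero, or_iff_right (inv_ne_zero hc)] at hφv
    simpa [Rat.smul_def, mul_comm] using hφv
  have hz0 : ∀ i, z i = 0 := fun i => by
    exact_mod_cast Fintype.linearIndependent_iff.1 hv _ hrel i
  exact hφ0 (LinearMap.ext fun x => by simp [hφ, hz0])

end AddSubgroup

theorem isClosed_setOf_map_eq {P X : Type*} [TopologicalSpace P] [FirstCountableTopology P]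
    [TopologicalSpace X] [HasOuterApproxClosed X] [MeasurableSpace X] [BorelSpace X]
    (μ : Measure X) [IsFiniteMeasure μ] {f : P → X → X} (hf : Continuous (uncurry f)) :
    IsClosed {p | μ.map (f p) = μ} := by
  have hfp : ∀ p, Continuous (f p) := fun p => hf.comp (Continuous.prodMk_right p)
  have hcont : ∀ g : X →ᵇ NNReal, Continuous fun p => ∫⁻ x, g (f p x) ∂μ := by
    refine fun g => continuous_iff_continuousAt.2 fun p => ?_
    refine tendsto_lintegral_filter_of_dominated_convergence (fun _ => (nndist 0 g : ENNReal))
      (Eventually.of_forall fun q => (g.continuous.comp (hfp q)).measurable.coe_nnreal_ennreal)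
      (Eventually.of_forall fun q => ae_of_all _ fun x =>
        ENNReal.coe_le_coe.2 (g.apply_le_nndist_zero _))
      (by simp [lintegral_const, ENNReal.mul_eq_top]) (ae_of_all _ fun x => ?_)
    exact ENNReal.continuous_coe.continuousAt.tendsto.comp
      ((g.continuous.comp (hf.comp (Continuous.prodMk_left x))).tendsto p)
  have hset : {p | μ.map (f p) = μ} = ⋂ g : X →ᵇ NNReal,
      {p | ∫⁻ x, g (f p x) ∂μ = ∫⁻ x, g x ∂μ} := by
    ext p
    have hmap : ∀ g : X →ᵇ NNReal, ∫⁻ x, g x ∂(μ.map (f p)) = ∫⁻ x, g (f p x) ∂μ := fun g =>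
      lintegral_map g.continuous.measurable.coe_nnreal_ennreal (hfp p).measurable
    simp only [Set.mem_ofPred_eq, Set.mem_iInter, ← hmap]
    exact ⟨fun h g => by rw [h], ext_of_forall_lintegral_eq_of_IsFiniteMeasure⟩
  rw [hset]
  exact isClosed_iInter fun g => isClosed_eq (hcont g) continuous_const

theorem diagFlow_zero (d : ℕ) (t : ℝ) : diagFlow d 0 t = id := by
  ext z j
  simp [diagFlow]

theorem diagFlow_add (d : ℕ) (α β : Fin d → ℝ) (t : ℝ) :
    diagFlow d (α + β) t = diagFlow d α t ∘ diagFlow d β t := by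
  ext z j
  simp only [diagFlow, comp_apply, Pi.add_apply, add_mul, Complex.ofReal_add, mul_add,
    Complex.exp_add, mul_assoc]

theorem diagFlow_smul_one (d : ℕ) (α : Fin d → ℝ) (t : ℝ) :
    diagFlow d (t • α) 1 = diagFlow d α t := by
  ext z j
  simp [diagFlow, mul_comm t]

theorem continuous_uncurry_diagFlow (d : ℕ) (t : ℝ) :
    Continuous (uncurry fun α => diagFlow d α t) := by
  unfold diagFlow
  fun_prop

theorem diagFlow_eq_id (d : ℕ) {α : Fin d → ℝ} {t : ℝ}
    (h : ∀ j, ∃ k : ℤ, α j * t = 2 * Real.pi * k) : diagFlow d α t = id := by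
  ext z j
  obtain ⟨k, hk⟩ := h j
  have : -Complex.I * ((α j * t : ℝ) : ℂ) = (-k : ℤ) * (2 * Real.pi * Complex.I) := by
    rw [hk]; push_cast; ring
  simp only [diagFlow, this, Complex.exp_int_mul_two_pi_mul_I, one_mul, id]

theorem continuous_diagFlow (d : ℕ) (α : Fin d → ℝ) (t : ℝ) : Continuous (diagFlow d α t) :=
  (continuous_uncurry_diagFlow d t).comp (Continuous.prodMk_right α)

theorem map_diagFlow_add {d : ℕ} {μ : Measure (Fin d → ℂ)} {α β : Fin d → ℝ} (t : ℝ) :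
    μ.map (diagFlow d (α + β) t) = (μ.map (diagFlow d β t)).map (diagFlow d α t) := by
  rw [diagFlow_add, Measure.map_map (continuous_diagFlow d α t).measurable
    (continuous_diagFlow d β t).measurable]

def invariantFrequencies (d : ℕ) (μ : Measure (Fin d → ℂ)) : AddSubgroup (Fin d → ℝ) where
  carrier := {α | μ.map (diagFlow d α 1) = μ}
  zero_mem' := by simp [diagFlow_zero]
  add_mem' {α β} hα hβ := by
    simp only [Set.mem_ofPred_eq] at *
    rw [map_diagFlow_add, hβ, hα]
  neg_mem' {α} hα := by
    simp only [Set.mem_ofPred_eq] at *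
    conv_lhs => rw [← hα]
    rw [← map_diagFlow_add, neg_add_cancel, diagFlow_zero, Measure.map_id]

theorem isClosed_invariantFrequencies (d : ℕ) (μ : Measure (Fin d → ℂ)) [IsFiniteMeasure μ] :
    IsClosed (invariantFrequencies d μ : Set (Fin d → ℝ)) :=
  isClosed_setOf_map_eq μ (continuous_uncurry_diagFlow d 1)

theorem map_diagFlow_eq_iff {d : ℕ} {μ : Measure (Fin d → ℂ)} {α : Fin d → ℝ} {t : ℝ} :
    μ.map (diagFlow d α t) = μ ↔ t • α ∈ invariantFrequencies d μ := by
  rw [← diagFlow_smul_one]; rfl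

theorem mem_invariantFrequencies_of_forall_eq_intCast {d : ℕ} {μ : Measure (Fin d → ℂ)}
    {α : Fin d → ℝ} (h : ∀ j, ∃ k : ℤ, α j = 2 * Real.pi * k) : α ∈ invariantFrequencies d μ := by
  change μ.map (diagFlow d α 1) = μ
  rw [diagFlow_eq_id d fun j => by simpa using h j, Measure.map_id]

theorem exists_pos_nat_mul_eq_intCast {κ : Type*} [Fintype κ] (q : κ → ℚ) :
    ∃ N : ℕ, 0 < N ∧ ∀ k, ∃ z : ℤ, (N : ℚ) * q k = z := by
  refine ⟨∏ k, (q k).den, Finset.prod_pos fun k _ => (q k).den_pos, fun k => ?_⟩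
  obtain ⟨r, hr⟩ := Finset.dvd_prod_of_mem (fun k => (q k).den) (Finset.mem_univ k)
  refine ⟨(q k).num * r, ?_⟩
  rw [hr]
  push_cast
  rw [mul_comm, ← mul_assoc, Rat.mul_den_eq_num]

def frequencyMap {d m : ℕ} (ν : Fin m → Fin d → ℚ) : (Fin m → ℝ) →ₗ[ℝ] (Fin d → ℝ) :=
  (Matrix.of fun n j => (ν n j : ℝ)).vecMulLinear

theorem frequencyMap_apply {d m : ℕ} (ν : Fin m → Fin d → ℚ) (s : Fin m → ℝ) (j : Fin d) :
    frequencyMap ν s j = ∑ n, s n * ν n j :=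
  rfl

theorem frequencyMap_single {d m : ℕ} (ν : Fin m → Fin d → ℚ) (n : Fin m) (a : ℝ) :
    frequencyMap ν (Pi.single n a) = fun j => a * ν n j := by
  ext j
  simp [frequencyMap, Matrix.single_vecMul]

theorem exists_forall_frequencyMap_single_mem {d m : ℕ} (ν : Fin m → Fin d → ℚ)
    (μ : Measure (Fin d → ℂ)) :
    ∃ c : ℝ, c ≠ 0 ∧ ∀ n, frequencyMap ν (Pi.single n c) ∈ invariantFrequencies d μ := by
  obtain ⟨N, hN, hνN⟩ := exists_pos_nat_mul_eq_intCast fun p : Fin m × Fin d => ν p.1 p.2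
  refine ⟨2 * Real.pi * N, by positivity, fun n => ?_⟩
  refine mem_invariantFrequencies_of_forall_eq_intCast fun j => ?_
  obtain ⟨z, hz⟩ := hνN (n, j)
  refine ⟨z, ?_⟩
  have hz' : (N : ℝ) * ν n j = z := by exact_mod_cast hz
  rw [frequencyMap_single, ← hz']
  ring

theorem stmt14_general (d m : ℕ) (ω : Fin d → ℝ)
    (v : Fin m → ℝ) (hv_indep : LinearIndependent ℚ v)
    (ν : Fin m → Fin d → ℚ) (hdec : ∀ j, ω j = ∑ n, v n * ((ν n j : ℝ)))
    (μ : Measure (Fin d → ℂ)) [IsProbabilityMeasure μ] :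
    (∀ t : ℝ, Measure.map (diagFlow d ω t) μ = μ) ↔
      (∀ (n : Fin m) (t : ℝ),
        Measure.map (diagFlow d (fun j => v n * (ν n j : ℝ)) t) μ = μ) := by
  let A := (invariantFrequencies d μ).comap (frequencyMap ν).toAddMonoidHom
  have hH : ∀ t : ℝ, μ.map (diagFlow d ω t) = μ ↔ t • v ∈ A := fun t => by
    have : t • ω = frequencyMap ν (t • v) := by
      ext j
      simp [frequencyMap_apply, hdec, Finset.mul_sum, mul_assoc]
    rw [map_diagFlow_eq_iff, this]; rfl
  have hℋ : ∀ n (t : ℝ), μ.map (diagFlow d (fun j => v n * (ν n j : ℝ)) t) = μ ↔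
      Pi.single n (t * v n) ∈ A := fun n t => by
    have : t • (fun j => v n * (ν n j : ℝ)) = frequencyMap ν (Pi.single n (t * v n)) := by
      ext j
      simp [frequencyMap_single, mul_assoc]
    rw [map_diagFlow_eq_iff, this]; rfl
  simp only [hH, hℋ]
  constructor
  · intro hline n t
    obtain ⟨c, hc, hlat⟩ := exists_forall_frequencyMap_single_mem ν μ
    have hA_closed : IsClosed (A : Set (Fin m → ℝ)) :=
      (isClosed_invariantFrequencies d μ).preimage (frequencyMap ν).continuous_of_finiteDimensional
    have hA : A = ⊤ :=
      AddSubgroup.eq_top_of_forall_smul_mem_of_forall_single_mem hA_closed hv_indep hline hc hlat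
    simp [hA]
  · intro h t
    rw [← Finset.univ_sum_single (t • v)]
    exact sum_mem fun n _ => h n t

/-- With `ω = Σ_n v_n ν_n` (`v_n` `ℚ`-linearly independent, `ν_n ∈ ℚ^d`), a Borel
probability measure `μ` on phase space is invariant under the flow of
`H = Σ_j ω_j H_j` for all times iff it is invariant under each of the flows of
`ℋ_n = v_n Σ_j ν_{n,j} H_j`, whose frequency vectors are `v_n ν_n`. -/
theorem stmt14 (d m : ℕ) (ω : Fin d → ℝ) (hω : ∀ j, 0 < ω j)
    (v : Fin m → ℝ) (hv_indep : LinearIndependent ℚ v)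
    (ν : Fin m → Fin d → ℚ) (hdec : ∀ j, ω j = ∑ n, v n * ((ν n j : ℝ)))
    (μ : Measure (Fin d → ℂ)) [IsProbabilityMeasure μ] :
    (∀ t : ℝ, Measure.map (diagFlow d ω t) μ = μ) ↔
      (∀ (n : Fin m) (t : ℝ),
        Measure.map (diagFlow d (fun j => v n * (ν n j : ℝ)) t) μ = μ) :=
  stmt14_general d m ω v hv_indep ν hdec μ
end
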